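/- arXiv:1807.00615 — 4 statements merged into one kernel-verified Lean document; each statement's English description precedes it below -/
import Mathlib

section
/- Let b > 0, q > 0, m ≥ 1 an integer, T ≥ 0 and ζ* > 0 with ζ*T < 1 (the upper limit 1/T being +∞ when T = 0). Set C = b + mT, C* = m(1/ζ* − T)/C and S* = C*/(1 + C*). Then (m^m/Γ(m)) ∫₀^∞ ∫_{ζ*}^{1/T} λ^{q+m−1} e^{−λ(b + m/y)} y^{−2} (1/y − T)^{m−1} dy dλ = (Γ(q+m)/(Γ(m) C^q)) ∫₀^{S*} u^{m−1} (1−u)^{q−1} du; equivalently, the double integral equals (Γ(q)/C^q)·I_{S*}(m, q). -/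
/-! Write `C = b + mT`. The substitution `y = 1/(T + (C/m) v)` maps `(0, C*)` onto the range of
`y` and turns the inner integral into
`(C/m)^m ∫₀^{C*} λ^{q+m-1} e^{-λC(1+v)} v^{m-1} dv`. After Fubini the `λ`-integral is the Gamma
integral `Γ(q+m) (C(1+v))^{-(q+m)}`, and the substitution `u = v/(1+v)` turns the remaining
beta-prime integral over `(0, C*)` into the incomplete beta integral over `(0, S*)`. -/

open MeasureTheory Real

/-- The regularized incomplete beta function `I_x(α, β)`, with `I_x(α, β) = 0` for `x ≤ 0`. -/
noncomputable def regIncBeta (x α β : ℝ) : ℝ :=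
  if x ≤ 0 then 0
  else (∫ u in (0:ℝ)..x, u ^ (α - 1) * (1 - u) ^ (β - 1)) /
    (Real.Gamma α * Real.Gamma β / Real.Gamma (α + β))

open Set

lemma integral_Ioi_integral_rpow_mul_exp_neg_mul {r c₀ : ℝ} {s : Set ℝ} {c w : ℝ → ℝ}
    (hr : 0 < r) (hc₀ : 0 < c₀) (hs : MeasurableSet s) (hc : Measurable c)
    (hcs : ∀ t ∈ s, c₀ ≤ c t) (hw : IntegrableOn w s) :
    ∫ l in Ioi 0, ∫ t in s, l ^ (r - 1) * exp (-(l * c t)) * w t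
      = ∫ t in s, Gamma r * c t ^ (-r) * w t := by
  have hgamma : IntegrableOn (fun l : ℝ ↦ l ^ (r - 1) * exp (-(c₀ * l))) (Ioi 0) := by
    simpa only [rpow_one, neg_mul] using
      integrableOn_rpow_mul_exp_neg_mul_rpow (by linarith : -1 < r - 1) one_pos hc₀
  have hint : Integrable (Function.uncurry fun l t ↦ l ^ (r - 1) * exp (-(l * c t)) * w t)
      ((volume.restrict (Ioi 0)).prod (volume.restrict s)) := by
    refine (hgamma.mul_prod hw.norm).mono' ?_ ?_
    · exact ((by fun_prop : Measurable fun z : ℝ × ℝ ↦ z.1 ^ (r - 1) * exp (-(z.1 * c z.2)))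
        |>.aestronglyMeasurable).mul hw.aestronglyMeasurable.comp_snd
    · rw [Measure.prod_restrict]
      filter_upwards [ae_restrict_mem (measurableSet_Ioi.prod hs)] with z ⟨hl, ht⟩
      have hl0 : 0 < z.1 := hl
      have hexp : exp (-(z.1 * c z.2)) ≤ exp (-(c₀ * z.1)) :=
        exp_le_exp.mpr (by nlinarith [hcs _ ht])
      simp only [Function.uncurry, norm_mul, Real.norm_of_nonneg (rpow_nonneg hl0.le _),
        Real.norm_of_nonneg (exp_pos _).le]
      gcongr
  rw [integral_integral_swap hint]
  refine setIntegral_congr_fun hs fun t ht ↦ ?_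
  have hct : 0 < c t := hc₀.trans_le (hcs t ht)
  rw [integral_mul_const]
  simp_rw [mul_comm _ (c t)]
  rw [integral_rpow_mul_exp_neg_mul_Ioi hr hct, one_div, inv_rpow hct.le, rpow_neg hct.le]
  ring

lemma image_div_one_add_Ioo {c : ℝ} (hc : -1 < c) :
    (fun v : ℝ ↦ v / (1 + v)) '' Ioo 0 c = Ioo 0 (c / (1 + c)) := by
  ext u
  simp only [mem_image, mem_Ioo]
  constructor
  · rintro ⟨v, ⟨hv, hvc⟩, rfl⟩
    refine ⟨by positivity, ?_⟩
    rw [div_lt_div_iff₀ (by linarith) (by linarith)]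
    nlinarith
  · rintro ⟨hu, huc⟩
    have hc' : 0 < 1 + c := by linarith
    have hu1 : u < 1 := huc.trans ((div_lt_one hc').mpr (by linarith))
    refine ⟨u / (1 - u), ⟨div_pos hu (by linarith), ?_⟩, ?_⟩
    · rw [lt_div_iff₀ hc'] at huc
      rw [div_lt_iff₀ (by linarith)]
      nlinarith
    · have : 1 - u ≠ 0 := by linarith
      field_simp
      ring

lemma integral_Ioo_rpow_mul_one_add_rpow_neg (a b : ℝ) {c : ℝ} (hc : -1 < c) :
    ∫ v in Ioo 0 c, v ^ (a - 1) * (1 + v) ^ (-(a + b))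
      = ∫ u in Ioo 0 (c / (1 + c)), u ^ (a - 1) * (1 - u) ^ (b - 1) := by
  have hderiv : ∀ v ∈ Ioo (0 : ℝ) c,
      HasDerivWithinAt (fun v : ℝ ↦ v / (1 + v)) (1 / (1 + v) ^ 2) (Ioo 0 c) v := by
    intro v hv
    have h1v : 1 + v ≠ 0 := by linarith [hv.1]
    have h := (hasDerivAt_id' v).div ((hasDerivAt_id' v).const_add 1) h1v
    rw [show (1 * (1 + v) - v * 1) / (1 + v) ^ 2 = 1 / (1 + v) ^ 2 by ring] at h
    exact h.hasDerivWithinAt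
  have hinj : InjOn (fun v : ℝ ↦ v / (1 + v)) (Ioo 0 c) := by
    intro v hv w hw h
    have := (div_eq_div_iff (by linarith [hv.1]) (by linarith [hw.1])).mp h
    linarith
  rw [← image_div_one_add_Ioo hc,
    integral_image_eq_integral_abs_deriv_smul measurableSet_Ioo hderiv hinj]
  refine setIntegral_congr_fun measurableSet_Ioo fun v hv ↦ ?_
  have hv0 : 0 < v := hv.1
  have h1v : 0 < 1 + v := by linarith
  have hsub : 1 - v / (1 + v) = (1 + v)⁻¹ := by field_simp; ring
  have hpow : (1 + v) ^ (-(a + b))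
      = (1 + v) ^ (-(2 : ℝ)) * (1 + v) ^ (-(a - 1)) * (1 + v) ^ (-(b - 1)) := by
    rw [← rpow_add h1v, ← rpow_add h1v]; ring_nf
  rw [smul_eq_mul, abs_of_pos (by positivity), hsub, div_rpow hv0.le h1v.le, inv_rpow h1v.le,
    hpow, rpow_neg h1v.le, rpow_neg h1v.le, rpow_neg h1v.le, rpow_two]
  field_simp

lemma image_inv_affine_Ioo {a T α : ℝ} (ha : 0 < a) (hT : 0 ≤ T) (hα : 0 < α) :
    (fun v : ℝ ↦ (T + α * v)⁻¹) '' Ioo 0 ((a⁻¹ - T) / α) = {y | a < y ∧ y * T < 1} := by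
  ext y
  simp only [mem_image, mem_Ioo, mem_ofPred_eq]
  constructor
  · rintro ⟨v, ⟨hv, hva⟩, rfl⟩
    have hpos : 0 < T + α * v := by positivity
    rw [lt_div_iff₀ hα] at hva
    refine ⟨?_, ?_⟩
    · rw [lt_inv_comm₀ ha hpos]; linarith
    · rw [inv_mul_lt_iff₀ hpos]; nlinarith
  · rintro ⟨hay, hyT⟩
    have hy : 0 < y := ha.trans hay
    refine ⟨(y⁻¹ - T) / α, ⟨div_pos ?_ hα, ?_⟩, ?_⟩
    · rw [sub_pos, ← one_div, lt_div_iff₀ hy]; linarith [mul_comm y T]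
    · gcongr
    · field_simp
      ring

lemma setIntegral_eq_integral_Ioo_comp_inv_affine (g : ℝ → ℝ) {a T α : ℝ} (ha : 0 < a)
    (hT : 0 ≤ T) (hα : 0 < α) :
    ∫ y in {y | a < y ∧ y * T < 1}, g y
      = ∫ v in Ioo 0 ((a⁻¹ - T) / α), α / (T + α * v) ^ 2 * g (T + α * v)⁻¹ := by
  have hderiv : ∀ v ∈ Ioo 0 ((a⁻¹ - T) / α), HasDerivWithinAt (fun v : ℝ ↦ (T + α * v)⁻¹)
      (-α / (T + α * v) ^ 2) (Ioo 0 ((a⁻¹ - T) / α)) v := by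
    intro v hv
    have hpos : 0 < T + α * v := by have := hv.1; positivity
    have h := (((hasDerivAt_id' v).const_mul α).const_add T).inv hpos.ne'
    rw [mul_one] at h
    exact h.hasDerivWithinAt
  have hinj : InjOn (fun v : ℝ ↦ (T + α * v)⁻¹) (Ioo 0 ((a⁻¹ - T) / α)) := by
    intro v _ w _ h
    exact mul_left_cancel₀ hα.ne' (add_left_cancel (inv_injective h))
  rw [← image_inv_affine_Ioo ha hT hα,
    integral_image_eq_integral_abs_deriv_smul measurableSet_Ioo hderiv hinj]
  refine setIntegral_congr_fun measurableSet_Ioo fun v hv ↦ ?_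
  have hpos : 0 < T + α * v := by have := hv.1; positivity
  rw [smul_eq_mul, abs_div, abs_neg, abs_of_pos hα, abs_of_pos (by positivity)]

lemma Rterm_inner_eq {b q T ζ p : ℝ} (l : ℝ) (hb : 0 < b) (hp : 0 < p) (hT : 0 ≤ T)
    (hζ : 0 < ζ) :
    ∫ y in {y | ζ < y ∧ y * T < 1},
        l ^ (q + p - 1) * exp (-(l * (b + p / y))) * (1 / y ^ 2) * (1 / y - T) ^ (p - 1)
      = ((b + p * T) / p) ^ p * ∫ v in Ioo 0 (p * (1 / ζ - T) / (b + p * T)),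
          l ^ (q + p - 1) * exp (-(l * ((b + p * T) * (1 + v)))) * v ^ (p - 1) := by
  set C := b + p * T
  have hC : 0 < C := by positivity
  have hα : 0 < C / p := by positivity
  rw [setIntegral_eq_integral_Ioo_comp_inv_affine _ hζ hT hα, ← integral_const_mul]
  have hV : (ζ⁻¹ - T) / (C / p) = p * (1 / ζ - T) / C := by field_simp
  rw [hV]
  refine setIntegral_congr_fun measurableSet_Ioo fun v hv ↦ ?_
  have hv0 : 0 < v := hv.1
  have hpos : 0 < T + C / p * v := by positivity
  have hexp : b + p / (T + C / p * v)⁻¹ = C * (1 + v) := by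
    simp only [C]; field_simp; ring
  have hbase : 1 / (T + C / p * v)⁻¹ - T = C / p * v := by field_simp; ring
  rw [hexp, hbase, mul_rpow hα.le hv0.le, rpow_sub_one hα.ne']
  field_simp

lemma Cstar_pos {b T ζ p : ℝ} (hb : 0 < b) (hp : 0 < p) (hT : 0 ≤ T) (hζ : 0 < ζ)
    (hζT : ζ * T < 1) : 0 < p * (1 / ζ - T) / (b + p * T) := by
  have : T < 1 / ζ := by rw [lt_div_iff₀ hζ]; linarith [mul_comm ζ T]
  exact div_pos (mul_pos hp (by linarith)) (by positivity)

lemma Rterm_integral_eq {b q T ζ p : ℝ} (hb : 0 < b) (hqp : 0 < q + p) (hp : 0 < p)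
    (hT : 0 ≤ T) (hζ : 0 < ζ) (hζT : ζ * T < 1) :
    ∫ l in Ioi 0, ∫ y in {y | ζ < y ∧ y * T < 1},
        l ^ (q + p - 1) * exp (-(l * (b + p / y))) * (1 / y ^ 2) * (1 / y - T) ^ (p - 1)
      = Gamma (q + p) / (p ^ p * (b + p * T) ^ q) *
          ∫ u in (0 : ℝ)..(p * (1 / ζ - T) / (b + p * T)) / (1 + p * (1 / ζ - T) / (b + p * T)),
            u ^ (p - 1) * (1 - u) ^ (q - 1) := by
  set C := b + p * T
  set V := p * (1 / ζ - T) / C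
  have hC : 0 < C := by positivity
  have hV : 0 < V := Cstar_pos hb hp hT hζ hζT
  have hw : IntegrableOn (fun v : ℝ ↦ v ^ (p - 1)) (Ioo 0 V) :=
    (intervalIntegral.integrableOn_Ioo_rpow_iff hV).mpr (by linarith)
  have hc : ∀ v ∈ Ioo 0 V, C ≤ C * (1 + v) := fun v hv ↦ by nlinarith [hv.1]
  calc _ = (C / p) ^ p * ∫ l in Ioi 0, ∫ v in Ioo 0 V,
        l ^ (q + p - 1) * exp (-(l * (C * (1 + v)))) * v ^ (p - 1) := by
          simp_rw [Rterm_inner_eq _ hb hp hT hζ, integral_const_mul]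
          rfl
    _ = (C / p) ^ p * ∫ v in Ioo 0 V,
          Gamma (q + p) * (C * (1 + v)) ^ (-(q + p)) * v ^ (p - 1) := by
          rw [integral_Ioi_integral_rpow_mul_exp_neg_mul hqp hC measurableSet_Ioo
            (by fun_prop) hc hw]
    _ = (C / p) ^ p * (Gamma (q + p) * C ^ (-(q + p)) *
          ∫ v in Ioo 0 V, v ^ (p - 1) * (1 + v) ^ (-(p + q))) := by
          rw [← integral_const_mul (Gamma (q + p) * C ^ (-(q + p)))]
          congr 1
          refine setIntegral_congr_fun measurableSet_Ioo fun v hv ↦ ?_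
          rw [mul_rpow hC.le (by linarith [hv.1]), add_comm p q]
          ring
    _ = _ := by
          rw [integral_Ioo_rpow_mul_one_add_rpow_neg _ _ (by linarith),
            intervalIntegral.integral_of_le (by positivity), integral_Ioc_eq_integral_Ioo,
            div_rpow hC.le hp.le, rpow_neg hC.le, rpow_add hC]
          field_simp

/-- Evaluation of the double integral `R_{l,j,m}`: for `b > 0`, `q > 0`,
an integer `m ≥ 1`, `T ≥ 0` and `ζ* > 0` with `ζ*T < 1`, setting `C = b + mT`,
`C* = m(1/ζ* − T)/C` and `S* = C*/(1 + C*)`,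
`(m^m/Γ(m)) ∫₀^∞ ∫_{ζ*}^{1/T} λ^{q+m−1} e^{−λ(b+m/y)} y^{−2} (1/y − T)^{m−1} dy dλ
  = (Γ(q+m)/(Γ(m) C^q)) B_{S*}(m, q) = (Γ(q)/C^q) I_{S*}(m, q)`,
where the region `(ζ*, 1/T)` is `{y | ζ* < y ∧ yT < 1}` (all of `(ζ*, ∞)` when `T = 0`). -/
theorem Rterm_eval (b q T ζstar : ℝ) (m : ℕ) (hb : 0 < b) (hq : 0 < q) (hm : 1 ≤ m)
    (hT : 0 ≤ T) (hζ : 0 < ζstar) (hζT : ζstar * T < 1) :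
    (((m : ℝ) ^ m / Real.Gamma m) *
        ∫ l in Set.Ioi (0:ℝ), ∫ y in {y : ℝ | ζstar < y ∧ y * T < 1},
          l ^ (q + m - 1) * Real.exp (-(l * (b + m / y))) * (1 / y ^ 2)
            * (1 / y - T) ^ ((m : ℝ) - 1))
      = (Real.Gamma (q + m) / (Real.Gamma m * (b + m * T) ^ q)) *
          ∫ u in (0:ℝ)..((((m : ℝ) * (1 / ζstar - T) / (b + m * T)))
              / (1 + (m : ℝ) * (1 / ζstar - T) / (b + m * T))),
            u ^ ((m : ℝ) - 1) * (1 - u) ^ (q - 1)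
    ∧ (((m : ℝ) ^ m / Real.Gamma m) *
        ∫ l in Set.Ioi (0:ℝ), ∫ y in {y : ℝ | ζstar < y ∧ y * T < 1},
          l ^ (q + m - 1) * Real.exp (-(l * (b + m / y))) * (1 / y ^ 2)
            * (1 / y - T) ^ ((m : ℝ) - 1))
      = (Real.Gamma q / (b + m * T) ^ q) *
          regIncBeta ((((m : ℝ) * (1 / ζstar - T) / (b + m * T)))
              / (1 + (m : ℝ) * (1 / ζstar - T) / (b + m * T))) (m : ℝ) q := by
  have hm0 : (0 : ℝ) < m := by exact_mod_cast hm
  have hV := Cstar_pos hb hm0 hT hζ hζT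
  have key := Rterm_integral_eq hb (by positivity : 0 < q + m) hm0 hT hζ hζT
  rw [rpow_natCast] at key
  rw [key]
  refine ⟨by field_simp, ?_⟩
  rw [regIncBeta, if_neg (not_le.mpr (div_pos hV (by linarith))), add_comm q]
  field_simp
end

section
/- Let 1 ≤ r ≤ n be integers, τ > 0, and let X₁,…,Xₙ be i.i.d. Exponential(λ) random variables with N = #{i : Xᵢ ≤ τ}. Then ∫₀^∞ π(λ; a, b) E_λ[min(N, r)] dλ = ∑_{m=1}^{r−1} ∑_{j=0}^{m} m C(n,m) C(m,j) (−1)^j b^a/(b+(n−m+j)τ)^a + ∑_{k=r}^{n} ∑_{j=0}^{k} r C(n,k) C(k,j) (−1)^j b^a/(b+(n−k+j)τ)^a. -/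
open MeasureTheory ProbabilityTheory Real Finset

/-- The Gamma(α, β) density. -/
noncomputable def gammaPdf (α β t : ℝ) : ℝ :=
  if 0 < t then β ^ α * t ^ (α - 1) * Real.exp (-β * t) / Real.Gamma α else 0

/-!
Given `λ`, the events `Xᵢ ≤ τ` are independent with probability `1 - e^{-λτ}`, so `N` is
binomial and `E_λ[min(N, r)] = ∑ₘ min(m, r) C(n, m) (1 - e^{-λτ})^m e^{-λτ(n-m)}`.
Expanding `(1 - e^{-λτ})^m` by the binomial theorem turns the integrand into a linear
combination of `π(λ; a, b) e^{-cλ}` with `c = (n - m + j)τ ≥ 0`, and each of these integrates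
to `b^a / (b + c)^a` (the Laplace transform of the Gamma law). Splitting the sum over `m` at
`r` gives the two double sums.
-/

lemma one_sub_pow_mul_pow_eq_sum {R : Type*} [CommRing R] (q : R) (m k : ℕ) :
    (1 - q) ^ m * q ^ k = ∑ j ∈ range (m + 1), (m.choose j : R) * (-1) ^ j * q ^ (k + j) := by
  rw [show 1 - q = -q + 1 by ring, add_pow, sum_mul]
  refine sum_congr rfl fun j _ => ?_
  rw [neg_pow, pow_add]
  ring

lemma sum_range_min_mul_eq_add {R : Type*} [Semiring R] {n r : ℕ} (hrn : r ≤ n)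
    (g : ℕ → R) :
    ∑ m ∈ range (n + 1), ((min m r : ℕ) : R) * g m
      = ∑ m ∈ Icc 1 (r - 1), (m : R) * g m + ∑ m ∈ Icc r n, (r : R) * g m := by
  rw [range_eq_Ico, ← Ico_union_Ico_eq_Ico (Nat.zero_le r) (by omega),
    sum_union (Ico_disjoint_Ico_consecutive _ _ _), ← Ico_add_one_right_eq_Icc r n]
  congr 1
  · refine (sum_subset (fun m hm => ?_) fun m hm hm' => ?_).symm.trans
      (sum_congr rfl fun m hm => ?_)
    all_goals simp only [mem_Icc, mem_Ico] at *
    · omega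
    · rw [show m = 0 by omega]; simp
    · rw [min_eq_left (by omega)]
  · exact sum_congr rfl fun m hm => by rw [min_eq_right (mem_Ico.mp hm).1]

section GammaLaplace

variable {a b c : ℝ}

lemma gammaPdf_mul_exp_neg_mul {l : ℝ} (hl : 0 < l) :
    gammaPdf a b l * exp (-(c * l)) = b ^ a / Gamma a * (l ^ (a - 1) * exp (-((b + c) * l))) := by
  rw [gammaPdf, if_pos hl, show -((b + c) * l) = -b * l + -(c * l) by ring, exp_add]
  ring

lemma integrableOn_gammaPdf_mul_exp_neg_mul (ha : 0 < a) (hbc : 0 < b + c) :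
    IntegrableOn (fun l => gammaPdf a b l * exp (-(c * l))) (Set.Ioi 0) := by
  have h := integrableOn_rpow_mul_exp_neg_mul_rpow (s := a - 1) (p := 1) (by linarith) one_pos hbc
  refine IntegrableOn.congr_fun (h.const_mul (b ^ a / Gamma a)) (fun l hl => ?_) measurableSet_Ioi
  rw [gammaPdf_mul_exp_neg_mul hl, rpow_one, neg_mul]

lemma integral_gammaPdf_mul_exp_neg_mul (ha : 0 < a) (hbc : 0 < b + c) :
    ∫ l in Set.Ioi 0, gammaPdf a b l * exp (-(c * l)) = b ^ a / (b + c) ^ a := by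
  rw [setIntegral_congr_fun measurableSet_Ioi fun l hl => gammaPdf_mul_exp_neg_mul hl,
    integral_const_mul, integral_rpow_mul_exp_neg_mul_Ioi ha hbc, one_div, inv_rpow hbc.le]
  field_simp [(Gamma_pos_of_pos ha).ne']

lemma gammaPdf_mul_one_sub_exp_pow_mul_exp_pow (τ l : ℝ) (m k : ℕ) :
    gammaPdf a b l * ((1 - exp (-(l * τ))) ^ m * exp (-(l * τ)) ^ k)
      = ∑ j ∈ range (m + 1),
          (m.choose j : ℝ) * (-1) ^ j * (gammaPdf a b l * exp (-(((k + j : ℕ) * τ) * l))) := by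
  rw [one_sub_pow_mul_pow_eq_sum, mul_sum]
  refine sum_congr rfl fun j _ => ?_
  rw [← exp_nat_mul]
  ring_nf

lemma integrableOn_gammaPdf_mul_one_sub_exp_pow_mul_exp_pow (ha : 0 < a) (hb : 0 < b)
    {τ : ℝ} (hτ : 0 ≤ τ) (m k : ℕ) :
    IntegrableOn (fun l => gammaPdf a b l * ((1 - exp (-(l * τ))) ^ m * exp (-(l * τ)) ^ k))
      (Set.Ioi 0) := by
  simp_rw [gammaPdf_mul_one_sub_exp_pow_mul_exp_pow]
  exact integrable_finsetSum _ fun j _ =>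
    (integrableOn_gammaPdf_mul_exp_neg_mul ha (by positivity)).const_mul _

lemma integral_gammaPdf_mul_one_sub_exp_pow_mul_exp_pow (ha : 0 < a) (hb : 0 < b)
    {τ : ℝ} (hτ : 0 ≤ τ) (m k : ℕ) :
    ∫ l in Set.Ioi 0, gammaPdf a b l * ((1 - exp (-(l * τ))) ^ m * exp (-(l * τ)) ^ k)
      = ∑ j ∈ range (m + 1),
          (m.choose j : ℝ) * (-1) ^ j * (b ^ a / (b + (k + j : ℕ) * τ) ^ a) := by
  simp_rw [gammaPdf_mul_one_sub_exp_pow_mul_exp_pow]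
  rw [integral_finsetSum _ fun j _ =>
    (integrableOn_gammaPdf_mul_exp_neg_mul ha (by positivity)).const_mul _]
  refine sum_congr rfl fun j _ => ?_
  rw [integral_const_mul, integral_gammaPdf_mul_exp_neg_mul ha (by positivity)]

end GammaLaplace

section CountOfIndependentEvents

variable {Ω ι β : Type*} [Fintype ι] [DecidableEq ι]
  {X : ι → Ω → β} {s : Set β} [DecidablePred (· ∈ s)]

lemma setOf_filter_mem_eq_biInter (S : Finset ι) :
    {ω | ({i | X i ω ∈ s} : Finset ι) = S}
      = ⋂ i ∈ (univ : Finset ι), X i ⁻¹' (if i ∈ S then s else sᶜ) := by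
  ext ω
  simp only [Set.mem_ofPred_eq, Set.mem_iInter, Finset.ext_iff, mem_filter, mem_univ, true_and]
  refine forall_congr' fun i => ?_
  split_ifs with hi <;> simp [hi]

variable [MeasurableSpace Ω] [MeasurableSpace β] {P : Measure Ω} [IsProbabilityMeasure P]

lemma measureReal_setOf_filter_mem_eq (hindep : iIndepFun X P)
    (hX : ∀ i, AEMeasurable (X i) P) (hs : MeasurableSet s) {p : ℝ}
    (hp : ∀ i, P.real (X i ⁻¹' s) = p) (S : Finset ι) :
    P.real {ω | ({i | X i ω ∈ s} : Finset ι) = S}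
      = p ^ #S * (1 - p) ^ (Fintype.card ι - #S) := by
  have hprob (i : ι) :
      P.real (X i ⁻¹' (if i ∈ S then s else sᶜ)) = if i ∈ S then p else 1 - p := by
    split_ifs
    · exact hp i
    · rw [Set.preimage_compl, probReal_compl_eq_one_sub₀ ((hX i).nullMeasurable hs), hp i]
  rw [setOf_filter_mem_eq_biInter, measureReal_def,
    hindep.measure_inter_preimage_eq_mul _ fun i _ => by split_ifs; exacts [hs, hs.compl],
    ENNReal.toReal_prod]
  simp only [← measureReal_def, hprob]
  rw [prod_ite, prod_const, prod_const, filter_mem_eq_inter, univ_inter, filter_not,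
    filter_mem_eq_inter, univ_inter, card_univ_sdiff]

lemma integral_comp_card_filter_mem (hindep : iIndepFun X P)
    (hX : ∀ i, AEMeasurable (X i) P) (hs : MeasurableSet s) {p : ℝ}
    (hp : ∀ i, P.real (X i ⁻¹' s) = p) (f : ℕ → ℝ) :
    ∫ ω, f #({i | X i ω ∈ s} : Finset ι) ∂P
      = ∑ m ∈ range (Fintype.card ι + 1),
          f m * (Fintype.card ι).choose m * p ^ m * (1 - p) ^ (Fintype.card ι - m) := by
  have hE (S : Finset ι) : NullMeasurableSet {ω | ({i | X i ω ∈ s} : Finset ι) = S} P := by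
    rw [setOf_filter_mem_eq_biInter]
    exact .biInter (Set.to_countable _) fun i _ => (hX i).nullMeasurable (by
      split_ifs; exacts [hs, hs.compl])
  have hsum (ω : Ω) : f #({i | X i ω ∈ s} : Finset ι)
      = ∑ S, {ω | ({i | X i ω ∈ s} : Finset ι) = S}.indicator (fun _ => f #S) ω := by
    rw [sum_eq_single_of_mem _ (mem_univ ({i | X i ω ∈ s} : Finset ι))]
    · simp
    · exact fun S _ hS => Set.indicator_of_notMem (fun h => hS h.symm) _
  simp_rw [hsum]
  rw [integral_finsetSum _ fun S _ => (integrable_const _).indicator₀ (hE S)]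
  simp_rw [integral_indicator₀ (hE _), setIntegral_const, smul_eq_mul,
    measureReal_setOf_filter_mem_eq hindep hX hs hp]
  rw [← powerset_univ,
    sum_powerset_apply_card fun m => p ^ m * (1 - p) ^ (Fintype.card ι - m) * f m, card_univ]
  refine sum_congr rfl fun m _ => ?_
  rw [nsmul_eq_mul]
  ring

end CountOfIndependentEvents

section ExponentialLifetimes

variable {Ω : Type*} [MeasurableSpace Ω] {P : Measure Ω} {l τ : ℝ}

lemma aemeasurable_of_map_eq_expMeasure {Y : Ω → ℝ} (hl : 0 < l)
    (hY : P.map Y = expMeasure l) : AEMeasurable Y P := by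
  have := isProbabilityMeasure_expMeasure hl
  exact .of_map_ne_zero (hY ▸ IsProbabilityMeasure.ne_zero _)

lemma measureReal_preimage_Iic_of_map_eq_expMeasure {Y : Ω → ℝ} (hl : 0 < l)
    (hY : P.map Y = expMeasure l) (hτ : 0 ≤ τ) :
    P.real (Y ⁻¹' Set.Iic τ) = 1 - exp (-(l * τ)) := by
  have := isProbabilityMeasure_expMeasure hl
  rw [← map_measureReal_apply_of_aemeasurable (aemeasurable_of_map_eq_expMeasure hl hY)
    measurableSet_Iic, hY, ← cdf_eq_real, cdf_expMeasure_eq hl, if_pos hτ]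

lemma integral_comp_card_filter_le_of_map_eq_expMeasure [IsProbabilityMeasure P] {n : ℕ}
    {X : Fin n → Ω → ℝ} (hl : 0 < l) (hτ : 0 ≤ τ) (hindep : iIndepFun X P)
    (hX : ∀ i, P.map (X i) = expMeasure l) (f : ℕ → ℝ) :
    ∫ ω, f #({i | X i ω ≤ τ} : Finset (Fin n)) ∂P
      = ∑ m ∈ range (n + 1),
          f m * n.choose m * (1 - exp (-(l * τ))) ^ m * exp (-(l * τ)) ^ (n - m) := by
  have h := integral_comp_card_filter_mem (s := Set.Iic τ) hindep
    (fun i => aemeasurable_of_map_eq_expMeasure hl (hX i)) measurableSet_Iic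
    (fun i => measureReal_preimage_Iic_of_map_eq_expMeasure hl (hX i) hτ) f
  simpa only [Set.mem_Iic, Fintype.card_fin, sub_sub_cancel] using h

end ExponentialLifetimes

theorem prior_expected_failures_hybrid_general
    {Ω : Type*} [MeasurableSpace Ω] (P : ℝ → Measure Ω)
    (hP : ∀ l, 0 < l → IsProbabilityMeasure (P l))
    (n r : ℕ) (hrn : r ≤ n) (τ : ℝ) (hτ : 0 < τ)
    (X : Fin n → Ω → ℝ)
    (hindep : ∀ l, 0 < l → iIndepFun X (P l))
    (hdist : ∀ l, 0 < l → ∀ i, Measure.map (X i) (P l) = expMeasure l)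
    (a b : ℝ) (ha : 0 < a) (hb : 0 < b)
    (N : Ω → ℕ) (hN : ∀ ω, N ω = (univ.filter (fun i => X i ω ≤ τ)).card) :
    (∫ l in Set.Ioi (0:ℝ), gammaPdf a b l * (∫ ω, (min (N ω) r : ℕ) ∂(P l) : ℝ))
      = (∑ m ∈ Icc 1 (r - 1), ∑ j ∈ range (m + 1),
          (m : ℝ) * (n.choose m : ℝ) * (m.choose j : ℝ) * (-1 : ℝ) ^ j
            * b ^ a / (b + ((n : ℝ) - m + j) * τ) ^ a)
        + ∑ k ∈ Icc r n, ∑ j ∈ range (k + 1),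
            (r : ℝ) * (n.choose k : ℝ) * (k.choose j : ℝ) * (-1 : ℝ) ^ j
              * b ^ a / (b + ((n : ℝ) - k + j) * τ) ^ a := by
  have hintegrand : ∀ l ∈ Set.Ioi (0 : ℝ),
      gammaPdf a b l * (∫ ω, (min (N ω) r : ℕ) ∂(P l) : ℝ)
        = ∑ m ∈ range (n + 1), ((min m r : ℕ) : ℝ) * n.choose m
            * (gammaPdf a b l * ((1 - exp (-(l * τ))) ^ m * exp (-(l * τ)) ^ (n - m))) := by
    intro l hl
    have := hP l hl
    simp only [hN]
    rw [integral_comp_card_filter_le_of_map_eq_expMeasure hl hτ.le (hindep l hl) (hdist l hl)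
      fun m => ((min m r : ℕ) : ℝ), mul_sum]
    exact sum_congr rfl fun m _ => by ring
  rw [setIntegral_congr_fun measurableSet_Ioi hintegrand, integral_finsetSum _ fun m _ =>
    (integrableOn_gammaPdf_mul_one_sub_exp_pow_mul_exp_pow ha hb hτ.le m (n - m)).const_mul _]
  calc _ = ∑ m ∈ range (n + 1), ((min m r : ℕ) : ℝ) * ∑ j ∈ range (m + 1),
        (n.choose m : ℝ) * (m.choose j : ℝ) * (-1 : ℝ) ^ j
          * b ^ a / (b + ((n : ℝ) - m + j) * τ) ^ a := by
        refine sum_congr rfl fun m hm => ?_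
        have hmn : m ≤ n := Nat.lt_succ_iff.mp (mem_range.mp hm)
        rw [integral_const_mul, integral_gammaPdf_mul_one_sub_exp_pow_mul_exp_pow ha hb hτ.le,
          mul_sum, mul_sum]
        refine sum_congr rfl fun j _ => ?_
        push_cast [Nat.cast_sub hmn]
        ring
    _ = _ := by
        rw [sum_range_min_mul_eq_add hrn]
        simp only [mul_sum, mul_div_assoc, mul_assoc]

/-- The prior-averaged expected number of observed failures under
Type-I hybrid censoring: `∫₀^∞ π(λ; a, b) E_λ[min(N, r)] dλ` equals the stated
double-sum expression. -/
theorem prior_expected_failures_hybrid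
    {Ω : Type*} [MeasurableSpace Ω] (P : ℝ → Measure Ω)
    (hP : ∀ l, 0 < l → IsProbabilityMeasure (P l))
    (n r : ℕ) (hr : 1 ≤ r) (hrn : r ≤ n) (τ : ℝ) (hτ : 0 < τ)
    (X : Fin n → Ω → ℝ)
    (hindep : ∀ l, 0 < l → iIndepFun X (P l))
    (hdist : ∀ l, 0 < l → ∀ i, Measure.map (X i) (P l) = expMeasure l)
    (a b : ℝ) (ha : 0 < a) (hb : 0 < b)
    (N : Ω → ℕ) (hN : ∀ ω, N ω = (univ.filter (fun i => X i ω ≤ τ)).card) :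
    (∫ l in Set.Ioi (0:ℝ), gammaPdf a b l * (∫ ω, (min (N ω) r : ℕ) ∂(P l) : ℝ))
      = (∑ m ∈ Icc 1 (r - 1), ∑ j ∈ range (m + 1),
          (m : ℝ) * (n.choose m : ℝ) * (m.choose j : ℝ) * (-1 : ℝ) ^ j
            * b ^ a / (b + ((n : ℝ) - m + j) * τ) ^ a)
        + ∑ k ∈ Icc r n, ∑ j ∈ range (k + 1),
            (r : ℝ) * (n.choose k : ℝ) * (k.choose j : ℝ) * (-1 : ℝ) ^ j
              * b ^ a / (b + ((n : ℝ) - k + j) * τ) ^ a :=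
  prior_expected_failures_hybrid_general P hP n r hrn τ hτ X hindep hdist a b ha hb N hN
end

section
/- Let a > 0, b > 0, an integer m ≥ 0, an integer k ≥ 1, a₀ ≥ 0, a₁,…,a_k > 0 and C_r > a₀. Define h₁(z) = a₀ + ∑_{j=1}^{k} a_j (m+a)(m+a+1)⋯(m+a+j−1)/(z+b)^j for z ≥ 0. Then h₁ is strictly decreasing on [0, ∞) with limit a₀ as z → ∞, and there exists t ≥ 0 such that {z ≥ 0 : h₁(z) ≤ C_r} = [t, ∞); in particular the region is nonempty and is an upper ray. -/
open Finset

/-!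
Since `m + a > 0`, `h₁ - a₀` is a nonempty sum of terms `c / (z + b) ^ j` with `c > 0` and
`j ≥ 1`, each continuous, strictly decreasing and tending to `0` for `z > -b`. The sublevel set
`{z ≥ 0 : h₁ z ≤ C_r}` is then closed, nonempty (as `a₀ < C_r`) and upward closed in `[0, ∞)`,
so it is the ray starting at its infimum.
-/

open Filter Topology

lemma Finset.strictAntiOn_sum {ι α β : Type*} [Preorder α] [AddCommMonoid β] [PartialOrder β]
    [IsOrderedCancelAddMonoid β] {s : Finset ι} (hs : s.Nonempty) {f : ι → α → β} {D : Set α}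
    (hf : ∀ i ∈ s, StrictAntiOn (f i) D) : StrictAntiOn (fun x => ∑ i ∈ s, f i x) D :=
  fun _ hx _ hy hxy => sum_lt_sum_of_nonempty hs fun i hi => hf i hi hx hy hxy

section InversePower

variable {b c : ℝ} {j : ℕ}

lemma strictAntiOn_div_add_pow (hc : 0 < c) (hj : j ≠ 0) :
    StrictAntiOn (fun z : ℝ => c / (z + b) ^ j) (Set.Ioi (-b)) := by
  intro x (hx : -b < x) y _ hxy
  have hxb : 0 < x + b := by linarith
  exact div_lt_div_of_pos_left hc (pow_pos hxb j)
    (pow_lt_pow_left₀ (by linarith) hxb.le hj)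

lemma continuousOn_div_add_pow : ContinuousOn (fun z : ℝ => c / (z + b) ^ j) (Set.Ioi (-b)) :=
  continuousOn_const.div (by fun_prop) fun z (hz : -b < z) => pow_ne_zero j (by linarith)

lemma tendsto_div_add_pow_atTop (hj : j ≠ 0) :
    Tendsto (fun z : ℝ => c / (z + b) ^ j) atTop (𝓝 0) :=
  tendsto_const_nhds.div_atTop
    ((tendsto_pow_atTop hj).comp (tendsto_atTop_add_const_right _ b tendsto_id))

end InversePower

theorem exists_sublevel_eq_Ici {f : ℝ → ℝ} {x₀ L C : ℝ} (hanti : AntitoneOn f (Set.Ici x₀))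
    (hcont : ContinuousOn f (Set.Ici x₀)) (hlim : Tendsto f atTop (𝓝 L)) (hLC : L < C) :
    ∃ t, x₀ ≤ t ∧ {z | x₀ ≤ z ∧ f z ≤ C} = Set.Ici t := by
  set S := {z | x₀ ≤ z ∧ f z ≤ C}
  have hne : S.Nonempty :=
    ((eventually_ge_atTop x₀).and ((hlim.eventually_lt_const hLC).mono fun _ => le_of_lt)).exists
  have hclosed : IsClosed S := hcont.preimage_isClosed_of_isClosed isClosed_Ici isClosed_Iic
  have hbdd : BddBelow S := ⟨x₀, fun _ hz => hz.1⟩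
  obtain ⟨hx₀t, hft⟩ : sInf S ∈ S := hclosed.csInf_mem hne hbdd
  refine ⟨sInf S, hx₀t, Set.Subset.antisymm (fun z hz => csInf_le hbdd hz) fun z hz => ?_⟩
  have hx₀z : x₀ ≤ z := hx₀t.trans hz
  exact ⟨hx₀z, (hanti hx₀t hx₀z hz).trans hft⟩

theorem bayes_decision_threshold_rule_general
    (a b : ℝ) (ha : 0 < a) (hb : 0 < b) (m : ℕ) (k : ℕ) (hk : 1 ≤ k)
    (acoef : ℕ → ℝ)
    (hapos : ∀ j, 1 ≤ j → j ≤ k → 0 < acoef j)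
    (Cr : ℝ) (hCr : acoef 0 < Cr)
    (h₁ : ℝ → ℝ)
    (hh₁ : ∀ z, h₁ z = acoef 0 + ∑ j ∈ Icc 1 k,
        acoef j * (∏ i ∈ range j, ((m : ℝ) + a + i)) / (z + b) ^ j) :
    StrictAntiOn h₁ (Set.Ici 0)
      ∧ Filter.Tendsto h₁ Filter.atTop (nhds (acoef 0))
      ∧ ∃ t, 0 ≤ t ∧ {z : ℝ | 0 ≤ z ∧ h₁ z ≤ Cr} = Set.Ici t := by
  have hj0 : ∀ j ∈ Icc 1 k, j ≠ 0 := fun j hj => by grind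
  have hcoef : ∀ j ∈ Icc 1 k, 0 < acoef j * ∏ i ∈ range j, ((m : ℝ) + a + i) := fun j hj =>
    mul_pos (hapos j (mem_Icc.1 hj).1 (mem_Icc.1 hj).2) (prod_pos fun i _ => by positivity)
  have hdom : Set.Ici (0 : ℝ) ⊆ Set.Ioi (-b) := Set.Ici_subset_Ioi.2 (neg_lt_zero.2 hb)
  have hanti : StrictAntiOn h₁ (Set.Ici 0) := funext hh₁ ▸
    ((Finset.strictAntiOn_sum (nonempty_Icc.2 hk) fun j hj =>
      strictAntiOn_div_add_pow (hcoef j hj) (hj0 j hj)).const_add (acoef 0)).mono hdom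
  have hlim : Tendsto h₁ atTop (𝓝 (acoef 0)) := funext hh₁ ▸ by
    simpa using (tendsto_finsetSum _ fun j hj =>
      tendsto_div_add_pow_atTop (hj0 j hj)).const_add (acoef 0)
  have hcont : ContinuousOn h₁ (Set.Ici 0) := funext hh₁ ▸
    (continuousOn_const.add (continuousOn_finsetSum _ fun _ _ => continuousOn_div_add_pow)).mono
      hdom
  exact ⟨hanti, hlim, exists_sublevel_eq_Ici hanti.antitoneOn hcont hlim hCr⟩

/-- The posterior expected acceptance cost
`h₁(z) = a₀ + ∑_{j=1}^{k} a_j (m+a)(m+a+1)⋯(m+a+j−1)/(z+b)^j` is strictly decreasing on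
`[0, ∞)` with limit `a₀` as `z → ∞`, and for `C_r > a₀` the acceptance region
`{z ≥ 0 : h₁(z) ≤ C_r}` is a nonempty upper ray `[t, ∞)`. -/
theorem bayes_decision_threshold_rule
    (a b : ℝ) (ha : 0 < a) (hb : 0 < b) (m : ℕ) (k : ℕ) (hk : 1 ≤ k)
    (acoef : ℕ → ℝ) (ha0 : 0 ≤ acoef 0)
    (hapos : ∀ j, 1 ≤ j → j ≤ k → 0 < acoef j)
    (Cr : ℝ) (hCr : acoef 0 < Cr)
    (h₁ : ℝ → ℝ)
    (hh₁ : ∀ z, h₁ z = acoef 0 + ∑ j ∈ Icc 1 k,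
        acoef j * (∏ i ∈ range j, ((m : ℝ) + a + i)) / (z + b) ^ j) :
    StrictAntiOn h₁ (Set.Ici 0)
      ∧ Filter.Tendsto h₁ Filter.atTop (nhds (acoef 0))
      ∧ ∃ t, 0 ≤ t ∧ {z : ℝ | 0 ≤ z ∧ h₁ z ≤ Cr} = Set.Ici t :=
  bayes_decision_threshold_rule_general a b ha hb m k hk acoef hapos Cr hCr h₁ hh₁
end

section
/- Let n ≥ 1, τ > 0, λ > 0, and let X₁,…,Xₙ be i.i.d. Exponential(λ) with M = #{i : Xᵢ ≤ τ}. Then P(M = 0) = e^{−nλτ}, and for the Type-I censored estimator λ̂ (equal to 0 if M = 0 and to M/(∑_{i=1}^{n} min(Xᵢ, τ)) if M ≥ 1), the distribution function of λ̂ is the mixture P(λ̂ ≤ x) = p·S(x) + (1−p)·H(x), where p = e^{−nλτ}, S(x) = 1 for x ≥ 0 and 0 otherwise, and H(x) = P(λ̂ ≤ x | M ≥ 1) is absolutely continuous with H(x) = 0 for x ≤ 1/(nτ); in particular, conditionally on M ≥ 1, λ̂ > 1/(nτ) almost surely. -/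
open MeasureTheory ProbabilityTheory Real Finset

/-!
By independence, `P(M = 0) = P(X₁ > τ)ⁿ = e^{-nλτ}`. On `{M ≥ 1}` some `Xᵢ < τ` almost surely, so
the total time on test `T = ∑ min(Xᵢ, τ)` is `< nτ` and `λ̂ = M / T ≥ 1 / T > 1 / (nτ)`. For
absolute continuity, fix a failed unit `i` and the other coordinates: then `λ̂ = m / (Xᵢ + c)`
with `m ≥ 1` and `c` not depending on `Xᵢ`, an injective smooth function of the absolutely
continuous `Xᵢ`, so by Tonelli in the `i`-th coordinate `λ̂` charges no Lebesgue-null set on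
`{M ≥ 1}`.
-/

namespace MeasureTheory.Measure

variable {ι : Type*} [Fintype ι] [DecidableEq ι] {X : ι → Type*} [∀ i, MeasurableSpace (X i)]
  {μ : ∀ i, Measure (X i)} [∀ i, SigmaFinite (μ i)]

theorem pi_eq_zero_of_forall_update_preimage_null (i : ι) {N : Set (∀ i, X i)}
    (hN : MeasurableSet N) (h : ∀ x, μ i (Function.update x i ⁻¹' N) = 0) :
    Measure.pi μ N = 0 := by
  have hle := lintegral_le_of_lmarginal_le (μ := μ) {i} (measurable_const.indicator hN)
    measurable_zero (f := N.indicator 1) (g := 0) fun x => by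
      rw [lmarginal_singleton, lmarginal_singleton]
      change ∫⁻ y, (Function.update x i ⁻¹' N).indicator 1 y ∂μ i ≤ ∫⁻ _, 0 ∂μ i
      rw [lintegral_indicator_one (hN.preimage (measurable_update x)), h, lintegral_zero]
  simpa [lintegral_indicator_one hN] using hle

end MeasureTheory.Measure

theorem Real.volume_preimage_div_add_null {a : ℝ} (ha : a ≠ 0) (c : ℝ) {B : Set ℝ}
    (hB : volume B = 0) : volume ((fun x => a / (x + c)) ⁻¹' B) = 0 := by
  have hsub : (fun x => a / (x + c)) ⁻¹' B ⊆ (fun y => a / y - c) '' (B \ {0}) ∪ {-c} := by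
    intro x hx
    by_cases hxc : x + c = 0
    · exact Or.inr (eq_neg_of_add_eq_zero_left hxc)
    · exact Or.inl ⟨a / (x + c), ⟨hx, div_ne_zero ha hxc⟩, by simp [div_div_cancel₀ ha]⟩
  refine measure_mono_null hsub (measure_union_null ?_ (measure_singleton _))
  refine addHaar_image_eq_zero_of_differentiableOn_of_addHaar_eq_zero volume
    (fun y hy => ?_) (measure_mono_null Set.sdiff_subset hB)
  exact ((differentiableAt_const a).div differentiableAt_id hy.2 |>.sub_const c)
    |>.differentiableWithinAt

namespace ProbabilityTheory

theorem expMeasure_absolutelyContinuous (r : ℝ) : expMeasure r ≪ volume :=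
  withDensity_absolutelyContinuous _ _

theorem expMeasure_Iic_zero {r : ℝ} (hr : 0 < r) : expMeasure r (Set.Iic 0) = 0 := by
  have := isProbabilityMeasure_expMeasure hr
  have h := cdf_expMeasure_eq hr 0
  rw [cdf_eq_real] at h
  simpa [measureReal_eq_zero_iff] using h

theorem expMeasure_Ioi {r x : ℝ} (hr : 0 < r) (hx : 0 ≤ x) :
    expMeasure r (Set.Ioi x) = ENNReal.ofReal (exp (-(r * x))) := by
  have := isProbabilityMeasure_expMeasure hr
  have h := cdf_expMeasure_eq hr x
  rw [cdf_eq_real, if_pos hx, ← Set.compl_Ioi, measureReal_compl measurableSet_Ioi,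
    probReal_univ] at h
  rw [← ofReal_measureReal]
  congr 1
  linarith

theorem ae_expMeasure_pos {r : ℝ} (hr : 0 < r) : ∀ᵐ y ∂expMeasure r, 0 < y :=
  ae_iff.2 <| measure_mono_null (fun _ => le_of_not_gt) (expMeasure_Iic_zero hr)

theorem ae_expMeasure_ne (r a : ℝ) : ∀ᵐ y ∂expMeasure r, y ≠ a :=
  (expMeasure_absolutelyContinuous r).ae_le (volume.ae_ne a)

end ProbabilityTheory

namespace TypeICensoring

variable {ι : Type*} [Fintype ι] (τ : ℝ)

noncomputable def failureCount (v : ι → ℝ) : ℕ := #{i | v i ≤ τ}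

def totalTimeOnTest (v : ι → ℝ) : ℝ := ∑ i, min (v i) τ

noncomputable def censoredMLE (v : ι → ℝ) : ℝ :=
  if failureCount τ v = 0 then 0 else failureCount τ v / totalTimeOnTest τ v

@[fun_prop]
theorem measurable_failureCount : Measurable (failureCount (ι := ι) τ) := by
  have : failureCount (ι := ι) τ = fun v => ∑ i, if v i ≤ τ then 1 else 0 :=
    funext fun v => card_filter _ _
  rw [this]
  exact Finset.measurable_sum _ fun i _ =>
    Measurable.ite (measurableSet_le (measurable_pi_apply i) measurable_const)
      measurable_const measurable_const

theorem measurableSet_failureCount_eq_zero : MeasurableSet {v : ι → ℝ | failureCount τ v = 0} :=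
  measurable_failureCount τ (measurableSet_singleton 0)

@[fun_prop]
theorem measurable_censoredMLE : Measurable (censoredMLE (ι := ι) τ) :=
  Measurable.ite (measurableSet_failureCount_eq_zero τ) measurable_const
    ((measurable_from_top.comp (measurable_failureCount τ)).div
      (by unfold totalTimeOnTest; fun_prop))

variable {τ}

theorem one_div_lt_censoredMLE {v : ι → ℝ} (hv : ∀ i, 0 < v i ∧ v i ≠ τ)
    (hM : 1 ≤ failureCount τ v) : 1 / (Fintype.card ι * τ) < censoredMLE τ v := by
  obtain ⟨i, hi⟩ := card_pos.1 hM
  have hvi : v i < τ := lt_of_le_of_ne (mem_filter.1 hi).2 (hv i).2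
  have hT : 0 < totalTimeOnTest τ v :=
    sum_pos (fun j _ => lt_min (hv j).1 ((hv i).1.trans hvi)) ⟨i, mem_univ i⟩
  have hTlt : totalTimeOnTest τ v < Fintype.card ι * τ := by
    simpa [totalTimeOnTest] using
      sum_lt_sum (fun j _ => min_le_right (v j) τ) ⟨i, mem_univ i, min_lt_of_left_lt hvi⟩
  have hM' : (1 : ℝ) ≤ failureCount τ v := by exact_mod_cast hM
  rw [censoredMLE, if_neg (by omega)]
  calc 1 / (Fintype.card ι * τ) < 1 / totalTimeOnTest τ v := one_div_lt_one_div_of_lt hT hTlt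
    _ ≤ failureCount τ v / totalTimeOnTest τ v := by gcongr

section Update

variable [DecidableEq ι] (v : ι → ℝ) (i : ι) {y : ℝ}

theorem failureCount_update_of_le (hy : y ≤ τ) :
    failureCount τ (Function.update v i y) = failureCount τ (Function.update v i τ) := by
  unfold failureCount
  congr 1
  ext j
  rcases eq_or_ne j i with rfl | hj <;> simp [*]

theorem failureCount_update_self_ne_zero : failureCount τ (Function.update v i τ) ≠ 0 :=
  card_ne_zero.2 ⟨i, by simp⟩

theorem totalTimeOnTest_update_of_le (hy : y ≤ τ) :
    totalTimeOnTest τ (Function.update v i y) = y + ∑ j ∈ univ \ {i}, min (v j) τ := by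
  simp only [totalTimeOnTest, Function.apply_update (fun _ x => min x τ),
    sum_update_of_mem (mem_univ i), min_eq_left hy]

theorem censoredMLE_update_of_le (hy : y ≤ τ) :
    censoredMLE τ (Function.update v i y) =
      failureCount τ (Function.update v i τ) / (y + ∑ j ∈ univ \ {i}, min (v j) τ) := by
  rw [censoredMLE, failureCount_update_of_le v i hy, totalTimeOnTest_update_of_le v i hy,
    if_neg (failureCount_update_self_ne_zero v i)]

end Update

section Law

variable (ν : Measure (ι → ℝ))

theorem toReal_measure_censoredMLE_le [IsFiniteMeasure ν] (x : ℝ) :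
    (ν {v | censoredMLE τ v ≤ x}).toReal =
      (ν {v | failureCount τ v = 0}).toReal * (if 0 ≤ x then 1 else 0) +
        (ν {v | censoredMLE τ v ≤ x ∧ 1 ≤ failureCount τ v}).toReal := by
  have hdiff : {v : ι → ℝ | censoredMLE τ v ≤ x} \ {v | failureCount τ v = 0} =
      {v | censoredMLE τ v ≤ x ∧ 1 ≤ failureCount τ v} := by
    ext v
    simp [Nat.one_le_iff_ne_zero]
  have hzero : {v : ι → ℝ | censoredMLE τ v ≤ x} ∩ {v | failureCount τ v = 0} =
      if 0 ≤ x then {v | failureCount τ v = 0} else ∅ := by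
    ext v
    split_ifs with hx <;> by_cases hv : failureCount τ v = 0 <;> simp [censoredMLE, hv, hx]
  rw [← measure_inter_add_sdiff _ (measurableSet_failureCount_eq_zero τ), hdiff,
    ENNReal.toReal_add (measure_ne_top _ _) (measure_ne_top _ _), hzero]
  split_ifs <;> simp

theorem toReal_measure_censoredMLE_le_and_le_one_sub [IsProbabilityMeasure ν] (x : ℝ) :
    (ν {v | censoredMLE τ v ≤ x ∧ 1 ≤ failureCount τ v}).toReal ≤
      1 - (ν {v | failureCount τ v = 0}).toReal := by
  rw [← measureReal_def, ← measureReal_def, ← probReal_compl_eq_one_sub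
    (measurableSet_failureCount_eq_zero τ)]
  exact measureReal_mono fun v hv => Nat.one_le_iff_ne_zero.1 hv.2

end Law

variable {μ : ι → Measure ℝ} [∀ i, SigmaFinite (μ i)]

theorem pi_failureCount_eq_zero :
    Measure.pi μ {v | failureCount τ v = 0} = ∏ i, μ i (Set.Ioi τ) := by
  have : {v : ι → ℝ | failureCount τ v = 0} = Set.univ.pi fun _ => Set.Ioi τ := by
    ext v
    simp [failureCount, filter_eq_empty_iff]
  rw [this, Measure.pi_pi]

theorem pi_censoredMLE_le_one_div_eq_zero (hμ : ∀ i, ∀ᵐ y ∂μ i, 0 < y ∧ y ≠ τ) :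
    Measure.pi μ {v | 1 ≤ failureCount τ v ∧ censoredMLE τ v ≤ 1 / (Fintype.card ι * τ)} = 0 := by
  rw [measure_eq_zero_iff_ae_notMem]
  filter_upwards [Filter.eventually_all.2 fun i => Measure.tendsto_eval_ae_ae.eventually (hμ i)]
    with v hv ⟨hM, hle⟩
  exact (one_div_lt_censoredMLE hv hM).not_ge hle

theorem map_censoredMLE_restrict_absolutelyContinuous (hμ : ∀ i, μ i ≪ volume) :
    ((Measure.pi μ).restrict {v | 1 ≤ failureCount τ v}).map (censoredMLE τ) ≪ volume := by
  classical
  refine Measure.AbsolutelyContinuous.mk fun B hB hB0 => ?_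
  rw [Measure.map_apply (measurable_censoredMLE τ) hB,
    Measure.restrict_apply (measurable_censoredMLE τ hB)]
  have hsub : censoredMLE τ ⁻¹' B ∩ {v | 1 ≤ failureCount τ v} ⊆
      ⋃ i, {v : ι → ℝ | v i ≤ τ ∧ censoredMLE τ v ∈ B} := by
    rintro v ⟨hvB, hv⟩
    obtain ⟨i, hi⟩ := card_pos.1 hv
    exact Set.mem_iUnion.2 ⟨i, (mem_filter.1 hi).2, hvB⟩
  refine measure_mono_null hsub (measure_iUnion_null fun i => ?_)
  have hmeas : MeasurableSet {v : ι → ℝ | v i ≤ τ ∧ censoredMLE τ v ∈ B} :=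
    (measurableSet_le (measurable_pi_apply i) measurable_const).inter
      (measurable_censoredMLE τ hB)
  refine Measure.pi_eq_zero_of_forall_update_preimage_null i hmeas fun v => hμ i ?_
  have hm : (failureCount τ (Function.update v i τ) : ℝ) ≠ 0 :=
    Nat.cast_ne_zero.2 (failureCount_update_self_ne_zero v i)
  refine measure_mono_null (fun y ⟨hyτ, hyB⟩ => ?_)
    (volume_preimage_div_add_null hm (∑ j ∈ univ \ {i}, min (v j) τ) hB0)
  rw [Function.update_self] at hyτ
  rwa [Set.mem_preimage, ← censoredMLE_update_of_le v i hyτ]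

theorem exists_setIntegral_Iic_eq_pi_censoredMLE_le_and [∀ i, IsFiniteMeasure (μ i)]
    (hμ : ∀ i, μ i ≪ volume) : ∃ h : ℝ → ℝ, ∀ x,
      ∫ y in Set.Iic x, h y =
        (Measure.pi μ {v | censoredMLE τ v ≤ x ∧ 1 ≤ failureCount τ v}).toReal := by
  refine ⟨fun y => ((((Measure.pi μ).restrict {v | 1 ≤ failureCount τ v}).map
    (censoredMLE τ)).rnDeriv volume y).toReal, fun x => ?_⟩
  rw [Measure.setIntegral_toReal_rnDeriv (map_censoredMLE_restrict_absolutelyContinuous hμ),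
    measureReal_def, Measure.map_apply (measurable_censoredMLE τ) measurableSet_Iic,
    Measure.restrict_apply (measurable_censoredMLE τ measurableSet_Iic)]
  rfl

theorem toReal_pi_expMeasure_failureCount_eq_zero {lam : ℝ} (hlam : 0 < lam) (hτ : 0 ≤ τ) :
    (Measure.pi (fun _ : ι => expMeasure lam) {v | failureCount τ v = 0}).toReal =
      exp (-(Fintype.card ι * lam * τ)) := by
  have := isProbabilityMeasure_expMeasure hlam
  rw [pi_failureCount_eq_zero, prod_const, expMeasure_Ioi hlam hτ, ENNReal.toReal_pow,
    ENNReal.toReal_ofReal (exp_nonneg _), ← exp_nat_mul, card_univ]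
  ring_nf

end TypeICensoring

open TypeICensoring

theorem typeI_estimator_mixture_general
    {Ω : Type*} [MeasurableSpace Ω] (P : Measure Ω) [IsProbabilityMeasure P]
    (n : ℕ) (lam τ : ℝ) (hlam : 0 < lam) (hτ : 0 < τ)
    (X : Fin n → Ω → ℝ)
    (hindep : iIndepFun X P)
    (hdist : ∀ i, Measure.map (X i) P = expMeasure lam)
    (M : Ω → ℕ) (hM : ∀ ω, M ω = (univ.filter (fun i => X i ω ≤ τ)).card)
    (lamHat : Ω → ℝ)
    (hlamHat : ∀ ω, lamHat ω =
      if M ω = 0 then 0 else (M ω : ℝ) / ∑ i, min (X i ω) τ)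
    (p : ℝ) (hp : p = Real.exp (-(n * lam * τ)))
    (S : ℝ → ℝ) (hS : ∀ x, S x = if 0 ≤ x then 1 else 0)
    (H : ℝ → ℝ)
    (hH : ∀ x, H x = (P {ω | lamHat ω ≤ x ∧ 1 ≤ M ω}).toReal / (1 - p)) :
    (P {ω | M ω = 0}).toReal = p
      ∧ (∀ x, (P {ω | lamHat ω ≤ x}).toReal = p * S x + (1 - p) * H x)
      ∧ (∃ h : ℝ → ℝ, ∀ x, H x = ∫ y in Set.Iic x, h y)
      ∧ (∀ x, x ≤ 1 / ((n : ℝ) * τ) → H x = 0)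
      ∧ P {ω | 1 ≤ M ω ∧ lamHat ω ≤ 1 / ((n : ℝ) * τ)} = 0 := by
  have := isProbabilityMeasure_expMeasure hlam
  set μ : Measure (Fin n → ℝ) := Measure.pi fun _ => expMeasure lam
  have law : HasLaw (fun ω i => X i ω) μ P := hindep.hasLaw_pi fun i =>
    ⟨.of_map_ne_zero (by rw [hdist i]; exact IsProbabilityMeasure.ne_zero _), hdist i⟩
  obtain rfl : M = fun ω => failureCount τ fun i => X i ω := funext hM
  obtain rfl : lamHat = fun ω => censoredMLE τ fun i => X i ω := funext hlamHat
  have hM0 : (μ {v : Fin n → ℝ | failureCount τ v = 0}).toReal = p := by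
    simpa [hp] using toReal_pi_expMeasure_failureCount_eq_zero (ι := Fin n) hlam hτ.le
  have hnull : μ {v : Fin n → ℝ | 1 ≤ failureCount τ v ∧ censoredMLE τ v ≤ 1 / (n * τ)} = 0 := by
    simpa using pi_censoredMLE_le_one_div_eq_zero (ι := Fin n) (τ := τ)
      fun _ => (ae_expMeasure_pos hlam).and (ae_expMeasure_ne lam τ)
  have hH' (x : ℝ) :
      H x = (μ {v : Fin n → ℝ | censoredMLE τ v ≤ x ∧ 1 ≤ failureCount τ v}).toReal / (1 - p) := by
    rw [hH, law.measure_eq (p := fun v => censoredMLE τ v ≤ x ∧ 1 ≤ failureCount τ v)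
      (by measurability)]
  refine ⟨?_, fun x => ?_, ?_, fun x hx => ?_, ?_⟩
  · rwa [law.measure_eq (p := fun v => failureCount τ v = 0) (by measurability)]
  · rw [law.measure_eq (p := fun v => censoredMLE τ v ≤ x) (by measurability),
      toReal_measure_censoredMLE_le, hM0, hS, hH', mul_div_cancel_of_imp' fun h => ?_]
    -- the numerator of `H x` is at most `1 - p`, so it vanishes when `1 - p` does
    exact le_antisymm ((toReal_measure_censoredMLE_le_and_le_one_sub μ x).trans (by rw [hM0, h]))
      ENNReal.toReal_nonneg
  · obtain ⟨h, hh⟩ := exists_setIntegral_Iic_eq_pi_censoredMLE_le_and (τ := τ)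
      fun _ : Fin n => expMeasure_absolutelyContinuous lam
    exact ⟨fun y => h y / (1 - p), fun x => by rw [integral_div, hh, hH']⟩
  · have hle : {v : Fin n → ℝ | censoredMLE τ v ≤ x ∧ 1 ≤ failureCount τ v} ⊆
        {v | 1 ≤ failureCount τ v ∧ censoredMLE τ v ≤ 1 / (n * τ)} :=
      fun _ hv => ⟨hv.2, hv.1.trans hx⟩
    rw [hH', measure_mono_null hle hnull, ENNReal.toReal_zero, zero_div]
  · rwa [law.measure_eq (p := fun v => 1 ≤ failureCount τ v ∧ censoredMLE τ v ≤ 1 / (n * τ))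
      (by measurability)]

/-- Mixture decomposition of the distribution of the Type-I censored
estimator `λ̂`: `P(M = 0) = e^{−nλτ}`, and `P(λ̂ ≤ x) = p·S(x) + (1−p)·H(x)` where
`p = e^{−nλτ}`, `S` is the point-mass-at-0 CDF, and `H(x) = P(λ̂ ≤ x | M ≥ 1)` is
absolutely continuous (it has a density) and vanishes for `x ≤ 1/(nτ)`; in particular,
conditionally on `M ≥ 1`, `λ̂ > 1/(nτ)` almost surely. -/
theorem typeI_estimator_mixture
    {Ω : Type*} [MeasurableSpace Ω] (P : Measure Ω) [IsProbabilityMeasure P]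
    (n : ℕ) (hn : 1 ≤ n) (lam τ : ℝ) (hlam : 0 < lam) (hτ : 0 < τ)
    (X : Fin n → Ω → ℝ)
    (hindep : iIndepFun X P)
    (hdist : ∀ i, Measure.map (X i) P = expMeasure lam)
    (M : Ω → ℕ) (hM : ∀ ω, M ω = (univ.filter (fun i => X i ω ≤ τ)).card)
    (lamHat : Ω → ℝ)
    (hlamHat : ∀ ω, lamHat ω =
      if M ω = 0 then 0 else (M ω : ℝ) / ∑ i, min (X i ω) τ)
    (p : ℝ) (hp : p = Real.exp (-(n * lam * τ)))
    (S : ℝ → ℝ) (hS : ∀ x, S x = if 0 ≤ x then 1 else 0)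
    (H : ℝ → ℝ)
    (hH : ∀ x, H x = (P {ω | lamHat ω ≤ x ∧ 1 ≤ M ω}).toReal / (1 - p)) :
    (P {ω | M ω = 0}).toReal = p
      ∧ (∀ x, (P {ω | lamHat ω ≤ x}).toReal = p * S x + (1 - p) * H x)
      ∧ (∃ h : ℝ → ℝ, ∀ x, H x = ∫ y in Set.Iic x, h y)
      ∧ (∀ x, x ≤ 1 / ((n : ℝ) * τ) → H x = 0)
      ∧ P {ω | 1 ≤ M ω ∧ lamHat ω ≤ 1 / ((n : ℝ) * τ)} = 0 :=
  typeI_estimator_mixture_general P n lam τ hlam hτ X hindep hdist M hM lamHat hlamHat p hp S hS H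
    hH
end
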